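/- Let Ψ, Ψ̃ ∈ K^{m×n}, let J ⊆ {1,…,n} be nonempty with |J| ≤ s, and assume θ_s(Ψ̃*Ψ) < 1. Then the smallest singular value of Ψ̃_J*Ψ_J is at least 1 − θ_s(Ψ̃*Ψ) > 0 (in particular Ψ̃_J*Ψ_J is invertible), and the oblique projector Ψ_J(Ψ̃_J*Ψ_J)^{-1}Ψ̃_J* ∈ K^{m×m} satisfies ‖Ψ_J(Ψ̃_J*Ψ_J)^{-1}Ψ̃_J*‖ ≤ ‖Ψ_J‖·‖Ψ̃_J‖ / (1 − θ_s(Ψ̃*Ψ)). -/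

import Mathlib

/-!
For `v` supported on `J` write `x = E v` with `E = cols 1 J`, the isometric embedding by zero
padding, so that `Ψ_J = Ψ E` and `G = Ψ̃_J^* Ψ_J = E^* (Ψ̃^* Ψ) E`. The biorthogonality bound
applied to `x, x` reads `|⟨v, G v⟩ - ‖v‖²| ≤ θ ‖v‖²`, and Cauchy–Schwarz turns it into
`‖G v‖ ≥ (1 - θ) ‖v‖`. Hence `G` is invertible with `‖G⁻¹‖ ≤ (1 - θ)⁻¹`, and submultiplicativity
of the spectral norm together with `‖Ψ̃_J^*‖ = ‖Ψ̃_J‖` bounds the oblique projector.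
-/

open scoped BigOperators
open Matrix MeasureTheory

noncomputable section

namespace ObliquePursuit

variable {𝕜 : Type*} [RCLike 𝕜]

/-- The Euclidean (`ℓ²`) norm of a finitely indexed vector. -/
def l2 {ι : Type*} [Fintype ι] (x : ι → 𝕜) : ℝ :=
  Real.sqrt (∑ i, ‖x i‖ ^ 2)

/-- The spectral (`ℓ² → ℓ²` operator) norm of a matrix. -/
def specNorm {ι κ : Type*} [Fintype ι] [Fintype κ] [DecidableEq κ]
    (M : Matrix ι κ 𝕜) : ℝ :=
  ‖LinearMap.toContinuousLinearMap (Matrix.toEuclideanLin M)‖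

/-- `x` is `s`-sparse: it has at most `s` nonzero entries. -/
def Sparse {ι : Type*} (s : ℕ) (x : ι → 𝕜) : Prop :=
  ∃ J : Finset ι, J.card ≤ s ∧ ∀ i, x i ≠ 0 → i ∈ J

/-- The `s`-restricted biorthogonality constant `θ_s(M)`: the smallest `δ ≥ 0` such that
`|⟨y, Mx⟩ − ⟨y, x⟩| ≤ δ‖x‖₂‖y‖₂` for all `x, y` supported on a common index set of
cardinality at most `s`. -/
def theta {ι : Type*} [Fintype ι] (s : ℕ) (M : Matrix ι ι 𝕜) : ℝ :=
  sInf {δ : ℝ | 0 ≤ δ ∧ ∀ J : Finset ι, J.card ≤ s →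
    ∀ x y : ι → 𝕜, (∀ i, x i ≠ 0 → i ∈ J) → (∀ i, y i ≠ 0 → i ∈ J) →
      ‖star y ⬝ᵥ M.mulVec x - star y ⬝ᵥ x‖ ≤ δ * l2 x * l2 y}

/-- The `s`-restricted isometry constant `δ_s(Ψ)`. -/
def ric {ι κ : Type*} [Fintype ι] [Fintype κ] (s : ℕ) (Ψ : Matrix ι κ 𝕜) : ℝ :=
  sInf {δ : ℝ | 0 ≤ δ ∧ ∀ x : κ → 𝕜, Sparse s x →
    (1 - δ) * l2 x ^ 2 ≤ l2 (Ψ.mulVec x) ^ 2 ∧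
      l2 (Ψ.mulVec x) ^ 2 ≤ (1 + δ) * l2 x ^ 2}

/-- Coordinate projection `Π_J`: keep the entries indexed by `J`, zero out the others. -/
def proj {ι : Type*} [DecidableEq ι] (J : Finset ι) (x : ι → 𝕜) : ι → 𝕜 :=
  fun i => if i ∈ J then x i else 0

/-- The column submatrix `Ψ_J` of `Ψ` formed by the columns indexed by `J`. -/
def cols {ι κ : Type*} (Ψ : Matrix ι κ 𝕜) (J : Finset κ) :
    Matrix ι {j // j ∈ J} 𝕜 :=
  Ψ.submatrix id fun j => (j : κ)

/-- The `j`-th column of `Ψ`. -/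
def col {ι κ : Type*} (Ψ : Matrix ι κ 𝕜) (j : κ) : ι → 𝕜 :=
  fun i => Ψ i j

/-- The complementary oblique projector `E = I − Ψ_J (Ψ̃_J^* Ψ_J)⁻¹ Ψ̃_J^*`
(equal to `I` when `J = ∅`). -/
def obliqueE {ι κ : Type*} [Fintype ι] [DecidableEq ι] [DecidableEq κ]
    (Ψ Ψt : Matrix ι κ 𝕜) (J : Finset κ) : Matrix ι ι 𝕜 :=
  1 - cols Ψ J * ((cols Ψt J)ᴴ * cols Ψ J)⁻¹ * (cols Ψt J)ᴴ

/-- The smallest (real) eigenvalue of a matrix. -/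
def lamMin {ι : Type*} [Fintype ι] (G : Matrix ι ι 𝕜) : ℝ :=
  sInf {r : ℝ | ∃ v : ι → 𝕜, v ≠ 0 ∧ G.mulVec v = (r : 𝕜) • v}

/-- The `j`-th largest singular value (1-indexed) of a matrix, characterized via the
Eckart–Young–Mirsky theorem: `σ_j(A) = min { ‖A − B‖ : rank B < j }` where `‖·‖` is the
spectral norm. -/
def singVal {ι κ : Type*} [Fintype ι] [Fintype κ] [DecidableEq κ]
    (A : Matrix ι κ 𝕜) (j : ℕ) : ℝ :=
  sInf {r : ℝ | ∃ B : Matrix ι κ 𝕜, B.rank < j ∧ r = specNorm (A - B)}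

open scoped Matrix.Norms.L2Operator

section EuclideanNorm

variable {ι κ : Type*} [Fintype ι] [Fintype κ]

lemma l2_eq_norm (x : ι → 𝕜) : l2 x = ‖WithLp.toLp 2 x‖ := by
  rw [l2, EuclideanSpace.norm_eq]

lemma l2_nonneg (x : ι → 𝕜) : 0 ≤ l2 x := Real.sqrt_nonneg _

lemma l2_zero : l2 (0 : ι → 𝕜) = 0 := by simp [l2]

lemma l2_pos {x : ι → 𝕜} (hx : x ≠ 0) : 0 < l2 x := by
  rw [l2_eq_norm, norm_pos_iff]
  exact fun h => hx (congrArg WithLp.ofLp h)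

lemma norm_star_dotProduct_le (x y : ι → 𝕜) : ‖star y ⬝ᵥ x‖ ≤ l2 y * l2 x := by
  rw [dotProduct_comm, ← EuclideanSpace.inner_toLp_toLp, l2_eq_norm, l2_eq_norm]
  exact norm_inner_le_norm _ _

lemma norm_star_dotProduct_self (x : ι → 𝕜) : ‖star x ⬝ᵥ x‖ = l2 x ^ 2 := by
  rw [dotProduct_comm, ← EuclideanSpace.inner_toLp_toLp, inner_self_eq_norm_sq_to_K,
    l2_eq_norm]
  norm_cast
  exact Real.norm_of_nonneg (by positivity)

lemma star_mulVec_dotProduct (A : Matrix ι κ 𝕜) (x : κ → 𝕜) (y : ι → 𝕜) :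
    star (A *ᵥ x) ⬝ᵥ y = star x ⬝ᵥ (Aᴴ *ᵥ y) := by
  rw [star_mulVec, dotProduct_mulVec]

variable [DecidableEq κ]

lemma specNorm_eq_norm (M : Matrix ι κ 𝕜) : specNorm M = ‖M‖ := rfl

lemma l2_mulVec_le (M : Matrix ι κ 𝕜) (x : κ → 𝕜) : l2 (M *ᵥ x) ≤ specNorm M * l2 x := by
  rw [l2_eq_norm, l2_eq_norm]
  exact M.l2_opNorm_mulVec (WithLp.toLp 2 x)

lemma specNorm_le_of_l2_mulVec_le {M : Matrix ι κ 𝕜} {C : ℝ} (hC : 0 ≤ C)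
    (h : ∀ x, l2 (M *ᵥ x) ≤ C * l2 x) : specNorm M ≤ C :=
  ContinuousLinearMap.opNorm_le_bound _ hC fun x => by
    have hx := h x.ofLp
    rw [l2_eq_norm, l2_eq_norm, WithLp.toLp_ofLp] at hx
    exact hx

lemma specNorm_mul_mul_conjTranspose_le {ι' : Type*} [Fintype ι'] [DecidableEq ι']
    (A : Matrix ι κ 𝕜) (G : Matrix κ κ 𝕜) (B : Matrix ι' κ 𝕜) :
    specNorm (A * G * Bᴴ) ≤ specNorm A * specNorm G * specNorm B := by
  simp only [specNorm_eq_norm]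
  calc ‖A * G * Bᴴ‖ ≤ ‖A * G‖ * ‖Bᴴ‖ := l2_opNorm_mul _ _
    _ ≤ ‖A‖ * ‖G‖ * ‖B‖ := by
      rw [l2_opNorm_conjTranspose]
      gcongr
      exact l2_opNorm_mul _ _

end EuclideanNorm

lemma le_sInf_mul {S : Set ℝ} (hS : S.Nonempty) {a c : ℝ} (hc : 0 ≤ c)
    (h : ∀ δ ∈ S, a ≤ δ * c) : a ≤ sInf S * c := by
  rcases hc.eq_or_lt with rfl | hc
  · obtain ⟨δ, hδ⟩ := hS
    simpa using h δ hδ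
  · rw [← div_le_iff₀ hc]
    exact le_csInf hS fun δ hδ => (div_le_iff₀ hc).2 (h δ hδ)

lemma norm_sub_le_theta {ι : Type*} [Fintype ι] (s : ℕ) (M : Matrix ι ι 𝕜) {J : Finset ι}
    (hJ : J.card ≤ s) {x y : ι → 𝕜} (hx : ∀ i, x i ≠ 0 → i ∈ J) (hy : ∀ i, y i ≠ 0 → i ∈ J) :
    ‖star y ⬝ᵥ M *ᵥ x - star y ⬝ᵥ x‖ ≤ theta s M * l2 x * l2 y := by
  classical
  rw [mul_assoc]
  refine le_sInf_mul ⟨specNorm (M - 1), ?_⟩ (mul_nonneg (l2_nonneg x) (l2_nonneg y))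
    fun δ hδ => mul_assoc δ _ _ ▸ hδ.2 J hJ x y hx hy
  refine ⟨norm_nonneg _, fun J _ x y _ _ => ?_⟩
  rw [← dotProduct_sub]
  calc ‖star y ⬝ᵥ (M *ᵥ x - x)‖ = ‖star y ⬝ᵥ (M - 1) *ᵥ x‖ := by rw [sub_mulVec, one_mulVec]
    _ ≤ l2 y * l2 ((M - 1) *ᵥ x) := norm_star_dotProduct_le _ _
    _ ≤ l2 y * (specNorm (M - 1) * l2 x) :=
        mul_le_mul_of_nonneg_left (l2_mulVec_le (M - 1) x) (l2_nonneg y)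
    _ = specNorm (M - 1) * l2 x * l2 y := by ring

lemma cols_one_mulVec_apply_of_notMem {κ : Type*} [DecidableEq κ] (J : Finset κ) (v : J → 𝕜)
    {i : κ} (hi : i ∉ J) : (cols (1 : Matrix κ κ 𝕜) J *ᵥ v) i = 0 := by
  simp only [cols, mulVec, dotProduct, submatrix_apply, id, one_apply, ite_mul, one_mul,
    zero_mul]
  exact Finset.sum_eq_zero fun j _ => if_neg fun h : i = j => hi (h ▸ j.2)

section Compression

variable {κ : Type*} [Fintype κ] [DecidableEq κ] (J : Finset κ)

lemma cols_eq_mul_cols_one {ι : Type*} (Ψ : Matrix ι κ 𝕜) :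
    cols Ψ J = Ψ * cols (1 : Matrix κ κ 𝕜) J := by
  ext i j
  simp [cols, mul_apply, one_apply]

lemma conjTranspose_cols_one_mul_cols_one :
    (cols (1 : Matrix κ κ 𝕜) J)ᴴ * cols (1 : Matrix κ κ 𝕜) J = 1 := by
  rw [← cols_eq_mul_cols_one, cols, cols, conjTranspose_submatrix, conjTranspose_one,
    submatrix_submatrix]
  exact submatrix_one _ Subtype.val_injective

lemma l2_cols_one_mulVec (v : J → 𝕜) : l2 (cols (1 : Matrix κ κ 𝕜) J *ᵥ v) = l2 v := by
  have h := norm_star_dotProduct_self (cols (1 : Matrix κ κ 𝕜) J *ᵥ v)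
  rw [star_mulVec_dotProduct, mulVec_mulVec, conjTranspose_cols_one_mul_cols_one, one_mulVec,
    norm_star_dotProduct_self] at h
  exact (pow_left_inj₀ (l2_nonneg _) (l2_nonneg _) two_ne_zero).1 h.symm

lemma norm_compression_sub_le_theta (s : ℕ) (M : Matrix κ κ 𝕜) (hJ : J.card ≤ s)
    (v : J → 𝕜) :
    ‖star v ⬝ᵥ ((cols (1 : Matrix κ κ 𝕜) J)ᴴ * M * cols (1 : Matrix κ κ 𝕜) J) *ᵥ v -
        star v ⬝ᵥ v‖ ≤ theta s M * l2 v * l2 v := by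
  have hsupp : ∀ i, (cols (1 : Matrix κ κ 𝕜) J *ᵥ v) i ≠ 0 → i ∈ J := fun i hi => by
    by_contra h
    exact hi (cols_one_mulVec_apply_of_notMem J v h)
  have h := norm_sub_le_theta s M hJ hsupp hsupp
  rwa [star_mulVec_dotProduct, star_mulVec_dotProduct, mulVec_mulVec, mulVec_mulVec,
    mulVec_mulVec, conjTranspose_cols_one_mul_cols_one, one_mulVec, l2_cols_one_mulVec] at h

end Compression

lemma mul_l2_le_l2_of_norm_sub_le {ι : Type*} [Fintype ι] {v w : ι → 𝕜} {θ : ℝ}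
    (h : ‖star v ⬝ᵥ w - star v ⬝ᵥ v‖ ≤ θ * l2 v * l2 v) : (1 - θ) * l2 v ≤ l2 w := by
  rcases (l2_nonneg v).eq_or_lt with hv | hv
  · rw [← hv, mul_zero]
    exact l2_nonneg w
  refine le_of_mul_le_mul_left ?_ hv
  have hrev := norm_sub_norm_le (star v ⬝ᵥ v) (star v ⬝ᵥ w)
  rw [norm_sub_rev] at hrev
  calc l2 v * ((1 - θ) * l2 v) = ‖star v ⬝ᵥ v‖ - θ * l2 v * l2 v := by
        rw [norm_star_dotProduct_self]; ring
    _ ≤ ‖star v ⬝ᵥ w‖ := by linarith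
    _ ≤ l2 v * l2 w := norm_star_dotProduct_le _ _

section BoundedBelow

variable {ι : Type*} [Fintype ι] [DecidableEq ι] {G : Matrix ι ι 𝕜} {c : ℝ}

lemma isUnit_det_of_mul_l2_le (hc : 0 < c) (hG : ∀ v, c * l2 v ≤ l2 (G *ᵥ v)) :
    IsUnit G.det := by
  rw [isUnit_iff_ne_zero, Ne, ← exists_mulVec_eq_zero_iff]
  rintro ⟨v, hv, hGv⟩
  have h := hG v
  rw [hGv, l2_zero] at h
  exact (mul_pos hc (l2_pos hv)).not_ge h

lemma specNorm_inv_le_of_mul_l2_le (hc : 0 < c) (hG : ∀ v, c * l2 v ≤ l2 (G *ᵥ v)) :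
    specNorm G⁻¹ ≤ c⁻¹ :=
  specNorm_le_of_l2_mulVec_le (inv_nonneg.2 hc.le) fun u => by
    have h := hG (G⁻¹ *ᵥ u)
    rw [mulVec_mulVec, mul_nonsing_inv _ (isUnit_det_of_mul_l2_le hc hG), one_mulVec] at h
    rwa [inv_mul_eq_div, le_div_iff₀' hc]

end BoundedBelow

theorem statement5_general (m n s : ℕ) (Ψ Ψt : Matrix (Fin m) (Fin n) 𝕜)
    (J : Finset (Fin n)) (hcard : J.card ≤ s)
    (hθ : theta s (Ψtᴴ * Ψ) < 1) :
    (∀ v : {j // j ∈ J} → 𝕜,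
        (1 - theta s (Ψtᴴ * Ψ)) * l2 v ≤ l2 (((cols Ψt J)ᴴ * cols Ψ J).mulVec v)) ∧
      0 < 1 - theta s (Ψtᴴ * Ψ) ∧
      IsUnit ((cols Ψt J)ᴴ * cols Ψ J).det ∧
      specNorm (cols Ψ J * ((cols Ψt J)ᴴ * cols Ψ J)⁻¹ * (cols Ψt J)ᴴ) ≤
        specNorm (cols Ψ J) * specNorm (cols Ψt J) / (1 - theta s (Ψtᴴ * Ψ)) := by
  set θ := theta s (Ψtᴴ * Ψ)
  set G := (cols Ψt J)ᴴ * cols Ψ J with hGdef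
  set E := cols (1 : Matrix (Fin n) (Fin n) 𝕜) J
  have hpos : 0 < 1 - θ := sub_pos.2 hθ
  have hG : G = Eᴴ * (Ψtᴴ * Ψ) * E := by
    rw [hGdef, cols_eq_mul_cols_one J Ψ, cols_eq_mul_cols_one J Ψt, conjTranspose_mul]
    simp only [Matrix.mul_assoc]
    rfl
  have hlower : ∀ v, (1 - θ) * l2 v ≤ l2 (G *ᵥ v) := fun v =>
    mul_l2_le_l2_of_norm_sub_le (hG ▸ norm_compression_sub_le_theta J s (Ψtᴴ * Ψ) hcard v)
  refine ⟨hlower, hpos, isUnit_det_of_mul_l2_le hpos hlower, ?_⟩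
  calc specNorm (cols Ψ J * G⁻¹ * (cols Ψt J)ᴴ)
      ≤ specNorm (cols Ψ J) * specNorm G⁻¹ * specNorm (cols Ψt J) :=
        specNorm_mul_mul_conjTranspose_le _ _ _
    _ ≤ specNorm (cols Ψ J) * (1 - θ)⁻¹ * specNorm (cols Ψt J) := by
        gcongr
        · exact norm_nonneg _
        · exact norm_nonneg _
        · exact specNorm_inv_le_of_mul_l2_le hpos hlower
    _ = specNorm (cols Ψ J) * specNorm (cols Ψt J) / (1 - θ) := by ring

/-- lower bound on the smallest singular value of `Ψ̃_J^* Ψ_J` and norm bound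
on the oblique projector `Ψ_J(Ψ̃_J^* Ψ_J)⁻¹ Ψ̃_J^*`. -/
theorem statement5 (m n s : ℕ) (Ψ Ψt : Matrix (Fin m) (Fin n) 𝕜)
    (J : Finset (Fin n)) (hne : J.Nonempty) (hcard : J.card ≤ s)
    (hθ : theta s (Ψtᴴ * Ψ) < 1) :
    (∀ v : {j // j ∈ J} → 𝕜,
        (1 - theta s (Ψtᴴ * Ψ)) * l2 v ≤ l2 (((cols Ψt J)ᴴ * cols Ψ J).mulVec v)) ∧
      0 < 1 - theta s (Ψtᴴ * Ψ) ∧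
      IsUnit ((cols Ψt J)ᴴ * cols Ψ J).det ∧
      specNorm (cols Ψ J * ((cols Ψt J)ᴴ * cols Ψ J)⁻¹ * (cols Ψt J)ᴴ) ≤
        specNorm (cols Ψ J) * specNorm (cols Ψt J) / (1 - theta s (Ψtᴴ * Ψ)) :=
  statement5_general m n s Ψ Ψt J hcard hθ

end ObliquePursuit
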